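/- arXiv:1212.2074 — 9 statements merged into one kernel-verified Lean document; each statement's English description precedes it below -/
import Mathlib

section
/- For all real constants δ > 0 and κ > 0, the equation tanh(√(2δ)·x) = δ(2κx − δ)/(κ√(2δ)) has exactly one solution β in the open interval (0, ∞), and this unique solution satisfies β > δ/(2κ). -/
/-!
Since `√(2δ)² = 2δ`, the equation says exactly that `t := √(2δ)·β` solves
`t - tanh t = δ² / (κ√(2δ))`. The map `t ↦ t - tanh t` has derivative `tanh² t`, so it increases
strictly on `[0, ∞)` from `0` to `∞`, and every positive level is hit at exactly one `t > 0`.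
Finally `tanh t > 0` forces the right-hand side `δ(2κβ − δ)/(κ√(2δ))` to be positive.
-/

open Real Set

namespace Real

theorem hasDerivAt_tanh (x : ℝ) : HasDerivAt tanh (1 - tanh x ^ 2) x := by
  have hcosh : cosh x ≠ 0 := (cosh_pos x).ne'
  have h := (hasDerivAt_sinh x).div (hasDerivAt_cosh x) hcosh
  have htanh : sinh / cosh = tanh := funext fun y => (tanh_eq_sinh_div_cosh y).symm
  rw [htanh] at h
  refine h.congr_deriv ?_
  rw [tanh_eq_sinh_div_cosh]
  field_simp

theorem continuous_tanh : Continuous tanh :=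
  continuous_iff_continuousAt.mpr fun x => (hasDerivAt_tanh x).continuousAt

theorem tanh_pos {x : ℝ} (hx : 0 < x) : 0 < tanh x := by
  rw [tanh_eq_sinh_div_cosh]
  exact div_pos (sinh_pos_iff.mpr hx) (cosh_pos x)

theorem strictMonoOn_sub_tanh : StrictMonoOn (fun t => t - tanh t) (Ici 0) := by
  have hderiv (t : ℝ) : HasDerivAt (fun t => t - tanh t) (tanh t ^ 2) t := by
    exact ((hasDerivAt_id t).sub (hasDerivAt_tanh t)).congr_deriv (by ring)
  refine strictMonoOn_of_deriv_pos (convex_Ici 0)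
    (continuous_id.sub continuous_tanh).continuousOn fun t ht => ?_
  rw [interior_Ici] at ht
  rw [(hderiv t).deriv]
  exact pow_pos (tanh_pos ht) 2

theorem existsUnique_pos_sub_tanh_eq {c : ℝ} (hc : 0 < c) : ∃! t, 0 < t ∧ t - tanh t = c := by
  have hlevel : c ∈ Icc ((0 : ℝ) - tanh 0) ((c + 1) - tanh (c + 1)) := by
    rw [tanh_zero]
    constructor <;> linarith [tanh_lt_one (c + 1)]
  obtain ⟨t, ht, hteq⟩ := intermediate_value_Icc (by linarith)
    (continuous_id.sub continuous_tanh).continuousOn hlevel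
  have htpos : 0 < t := by
    rcases ht.1.eq_or_lt with rfl | h
    · simp [tanh_zero] at hteq
      linarith
    · exact h
  refine ⟨t, ⟨htpos, hteq⟩, fun u ⟨hu, hueq⟩ => ?_⟩
  exact strictMonoOn_sub_tanh.injOn hu.le htpos.le (hueq.trans hteq.symm)

end Real

theorem tanh_eq_div_iff_sub_tanh_eq {δ κ s β : ℝ} (hκ : κ ≠ 0) (hs : s ≠ 0) (hs2 : s ^ 2 = 2 * δ) :
    tanh (s * β) = δ * (2 * κ * β - δ) / (κ * s) ↔ s * β - tanh (s * β) = δ ^ 2 / (κ * s) := by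
  rw [eq_div_iff (mul_ne_zero hκ hs), eq_div_iff (mul_ne_zero hκ hs)]
  constructor <;> intro h <;> linear_combination (-1 : ℝ) * h + κ * β * hs2

/-- For all real constants `δ > 0` and `κ > 0`, the equation
`tanh(√(2δ)·x) = δ(2κx − δ)/(κ√(2δ))` has exactly one solution `β` in `(0, ∞)`,
and this unique solution satisfies `β > δ/(2κ)`. -/
theorem statement0 (δ κ : ℝ) (hδ : 0 < δ) (hκ : 0 < κ) :
    (∃! β : ℝ, 0 < β ∧
      Real.tanh (Real.sqrt (2*δ) * β) = δ * (2*κ*β - δ) / (κ * Real.sqrt (2*δ))) ∧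
    (∀ β : ℝ, 0 < β →
      Real.tanh (Real.sqrt (2*δ) * β) = δ * (2*κ*β - δ) / (κ * Real.sqrt (2*δ)) →
      δ / (2*κ) < β) := by
  set s := √(2 * δ)
  have hs : 0 < s := sqrt_pos.mpr (by positivity)
  have hs2 : s ^ 2 = 2 * δ := sq_sqrt (by positivity)
  have heq (β : ℝ) := tanh_eq_div_iff_sub_tanh_eq (β := β) hκ.ne' hs.ne' hs2
  constructor
  · obtain ⟨t, ⟨ht, hteq⟩, huniq⟩ := existsUnique_pos_sub_tanh_eq (c := δ ^ 2 / (κ * s))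
      (by positivity)
    have hst : s * (t / s) = t := mul_div_cancel₀ t hs.ne'
    refine ⟨t / s, ⟨div_pos ht hs, (heq _).mpr (by rwa [hst])⟩, fun β ⟨hβ, hβeq⟩ => ?_⟩
    rw [← huniq (s * β) ⟨mul_pos hs hβ, (heq β).mp hβeq⟩, mul_div_cancel_left₀ β hs.ne']
  · intro β hβ hβeq
    have hrhs : 0 < δ * (2 * κ * β - δ) / (κ * s) := hβeq ▸ tanh_pos (mul_pos hs hβ)
    have hfactor : 0 < 2 * κ * β - δ :=
      pos_of_mul_pos_right (div_pos_iff_of_pos_right (by positivity) |>.mp hrhs) hδ.le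
    rw [div_lt_iff₀ (by positivity)]
    linarith
end

section
/- Let δ, κ > 0, μ ≥ 0, let β be the unique solution in (0, ∞) of tanh(√(2δ)·β) = δ(2κβ − δ)/(κ√(2δ)), set A = −κ/(δ² cosh(√(2δ)β)), and define u(x) = A cosh(√(2δ)x) + (κ/δ)x² + (κ + δμ)/δ² for x ∈ [0, β]. Then u''(x) > 0 for all x ∈ [0, β), u''(β) = 0, u'(0) = 0, u'(β) = 1, and consequently 0 ≤ u'(x) ≤ 1 for all x ∈ [0, β]. -/
/-!
Writing `s = √(2δ)`, `u` is of the form `A cosh(s x) + a x² + b`, so `u'' = A s² cosh(s x) + 2a`.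
The choice of `A` makes `A s² cosh(s β) = -2a`, hence `u''(x) = 2a (1 - cosh(s x) / cosh(s β))`,
which is positive on `[0, β)` and vanishes at `β`. The equation defining `β` is exactly
`u'(β) = 1`, and `u'(0) = 0` by parity. Since `u'` is strictly increasing on `[0, β]`,
it stays between `u'(0) = 0` and `u'(β) = 1`.
-/

open Real Set

theorem mapsTo_Icc_of_deriv_pos {f : ℝ → ℝ} {a b : ℝ} (hf : ContinuousOn f (Icc a b))
    (hf' : ∀ x ∈ Ioo a b, 0 < deriv f x) : MapsTo f (Icc a b) (Icc (f a) (f b)) :=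
  (strictMonoOn_of_deriv_pos (convex_Icc a b) hf (by rwa [interior_Icc])).monotoneOn.mapsTo_Icc

noncomputable def coshQuadratic (A s a b x : ℝ) : ℝ := A * cosh (s * x) + a * x ^ 2 + b

section CoshQuadratic

variable (A s a b : ℝ)

theorem hasDerivAt_coshQuadratic (x : ℝ) :
    HasDerivAt (coshQuadratic A s a b) (A * s * sinh (s * x) + 2 * a * x) x := by
  have h := ((((hasDerivAt_id' x).const_mul s).cosh.const_mul A).add
    ((hasDerivAt_pow 2 x).const_mul a)).add_const b
  refine h.congr_deriv ?_
  push_cast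
  ring

theorem deriv_coshQuadratic :
    deriv (coshQuadratic A s a b) = fun x => A * s * sinh (s * x) + 2 * a * x :=
  funext fun x => (hasDerivAt_coshQuadratic A s a b x).deriv

theorem deriv_deriv_coshQuadratic :
    deriv (deriv (coshQuadratic A s a b)) = fun x => A * s ^ 2 * cosh (s * x) + 2 * a := by
  rw [deriv_coshQuadratic]
  funext x
  have h := (((hasDerivAt_id' x).const_mul s).sinh.const_mul (A * s)).add
    ((hasDerivAt_id' x).const_mul (2 * a))
  refine (h.congr_deriv ?_).deriv
  ring

theorem deriv_coshQuadratic_zero : deriv (coshQuadratic A s a b) 0 = 0 := by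
  simp [deriv_coshQuadratic]

variable {A s a b}

theorem deriv_deriv_coshQuadratic_eq {β : ℝ} (hA : A * s ^ 2 * cosh (s * β) = -2 * a) (x : ℝ) :
    deriv (deriv (coshQuadratic A s a b)) x = 2 * a * (1 - cosh (s * x) / cosh (s * β)) := by
  rw [deriv_deriv_coshQuadratic]
  field_simp
  linear_combination cosh (s * x) * hA

theorem deriv_deriv_coshQuadratic_pos {β x : ℝ} (ha : 0 < a) (hs : 0 < s)
    (hA : A * s ^ 2 * cosh (s * β) = -2 * a) (hx : 0 ≤ x) (hxβ : x < β) :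
    0 < deriv (deriv (coshQuadratic A s a b)) x := by
  have hlt : cosh (s * x) < cosh (s * β) := by
    rw [cosh_lt_cosh, abs_of_nonneg (by positivity), abs_of_nonneg (by nlinarith)]
    exact mul_lt_mul_of_pos_left hxβ hs
  rw [deriv_deriv_coshQuadratic_eq hA]
  exact mul_pos (by positivity) (sub_pos.2 ((div_lt_one (cosh_pos _)).mpr hlt))

end CoshQuadratic

theorem statement2_general (δ κ μ β A : ℝ) (hδ : 0 < δ) (hκ : 0 < κ)
    (heq : Real.tanh (Real.sqrt (2*δ) * β) = δ * (2*κ*β - δ) / (κ * Real.sqrt (2*δ)))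
    (hA : A = -κ / (δ^2 * Real.cosh (Real.sqrt (2*δ) * β)))
    (u : ℝ → ℝ)
    (hu : ∀ x : ℝ, u x = A * Real.cosh (Real.sqrt (2*δ) * x) + (κ/δ) * x^2 + (κ + δ*μ)/δ^2) :
    (∀ x : ℝ, 0 ≤ x → x < β → 0 < deriv (deriv u) x) ∧
    deriv (deriv u) β = 0 ∧
    deriv u 0 = 0 ∧
    deriv u β = 1 ∧
    (∀ x : ℝ, 0 ≤ x → x ≤ β → 0 ≤ deriv u x ∧ deriv u x ≤ 1) := by
  set s := Real.sqrt (2*δ)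
  have hs : 0 < s := Real.sqrt_pos.mpr (by linarith)
  have hs2 : s ^ 2 = 2 * δ := Real.sq_sqrt (by linarith)
  have hu' : u = coshQuadratic A s (κ/δ) ((κ + δ*μ)/δ^2) := funext hu
  have hnorm : A * s ^ 2 * cosh (s * β) = -2 * (κ/δ) := by
    rw [hA, hs2]
    field_simp
  have hpos : ∀ x, 0 ≤ x → x < β → 0 < deriv (deriv u) x := fun _ hx hxβ =>
    hu' ▸ deriv_deriv_coshQuadratic_pos (by positivity) hs hnorm hx hxβ
  have hzero : deriv u 0 = 0 := hu' ▸ deriv_coshQuadratic_zero _ _ _ _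
  have hslope : deriv u β = 1 := by
    rw [tanh_eq_sinh_div_cosh] at heq
    rw [hu', deriv_coshQuadratic, hA]
    field_simp at heq ⊢
    linear_combination -heq
  have hcont : Continuous (deriv u) := by
    rw [hu', deriv_coshQuadratic]
    fun_prop
  refine ⟨hpos, by simp [hu', deriv_deriv_coshQuadratic, hnorm], hzero, hslope,
    fun x hx hxβ => ?_⟩
  have := mapsTo_Icc_of_deriv_pos hcont.continuousOn (fun y hy => hpos y hy.1.le hy.2) ⟨hx, hxβ⟩
  rwa [hzero, hslope] at this

/-- With `β` the unique positive root of the free-boundary equation and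
`A = −κ/(δ² cosh(√(2δ)β))`, the function
`u(x) = A cosh(√(2δ)x) + (κ/δ)x² + (κ + δμ)/δ²` satisfies `u'' > 0` on `[0, β)`,
`u''(β) = 0`, `u'(0) = 0`, `u'(β) = 1`, and `0 ≤ u' ≤ 1` on `[0, β]`. -/
theorem statement2 (δ κ μ β A : ℝ) (hδ : 0 < δ) (hκ : 0 < κ) (hμ : 0 ≤ μ) (hβ : 0 < β)
    (heq : Real.tanh (Real.sqrt (2*δ) * β) = δ * (2*κ*β - δ) / (κ * Real.sqrt (2*δ)))
    (hA : A = -κ / (δ^2 * Real.cosh (Real.sqrt (2*δ) * β)))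
    (u : ℝ → ℝ)
    (hu : ∀ x : ℝ, u x = A * Real.cosh (Real.sqrt (2*δ) * x) + (κ/δ) * x^2 + (κ + δ*μ)/δ^2) :
    (∀ x : ℝ, 0 ≤ x → x < β → 0 < deriv (deriv u) x) ∧
    deriv (deriv u) β = 0 ∧
    deriv u 0 = 0 ∧
    deriv u β = 1 ∧
    (∀ x : ℝ, 0 ≤ x → x ≤ β → 0 ≤ deriv u x ∧ deriv u x ≤ 1) :=
  statement2_general δ κ μ β A hδ hκ heq hA u hu
end

section
/- Let δ, κ > 0, μ ≥ 0, let β be the unique solution in (0, ∞) of tanh(√(2δ)·β) = δ(2κβ − δ)/(κ√(2δ)), set A = −κ/(δ² cosh(√(2δ)β)), and define u : ℝ → ℝ by u(x) = A cosh(√(2δ)x) + (κ/δ)x² + (κ + δμ)/δ² for |x| ≤ β and u(x) = |x| − β + u(β) for |x| > β. Then u is twice continuously differentiable on ℝ, |u'(x)| ≤ 1 for all x ∈ ℝ, (1/2)u''(x) − δu(x) + κx² + μ = 0 for all |x| ≤ β, (1/2)u''(x) − δu(x) + κx² + μ ≥ 0 for all |x| ≥ β, and hence min{(1/2)u''(x)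 − δu(x) + κx² + μ, 1 − |u'(x)|} = 0 for all x ∈ ℝ. -/
/-!
On `|x| ≤ β` the candidate is the even solution `A cosh(√(2δ) x) + (κ/δ) x² + (κ + δμ)/δ²` of
`(1/2) v'' - δ v + κ x² + μ = 0`, continued linearly with slope `±1` outside. The choice of `A`
gives `v''(β) = 0` and the equation for `β` gives `v'(β) = 1` (smooth fit), so the three pieces
glue to a `C²` function with `u'' = 0` off `[-β, β]`. As `A < 0`, `v''` decreases in `|x|`, so it
is nonnegative on `[-β, β]` and `v'` increases there from `-1` to `1`. Off `[-β, β]` the equation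
becomes `(|x| - β)(κ(|x| + β) - δ) ≥ 0`, which holds because `tanh(√(2δ)β) > 0` forces `2κβ > δ`.
-/

open Real Set Filter Topology

section Gluing

variable {a b : ℝ} {f g l r f' g' l' r' : ℝ → ℝ}

theorem hasDerivAt_ite_le (hf : ∀ x, HasDerivAt f (f' x) x) (hg : ∀ x, HasDerivAt g (g' x) x)
    (hb : f b = g b) (hb' : f' b = g' b) (x : ℝ) :
    HasDerivAt (fun y => if y ≤ b then f y else g y) (if x ≤ b then f' x else g' x) x := by
  rcases lt_trichotomy x b with hx | rfl | hx
  · rw [if_pos hx.le]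
    refine (hf x).congr_of_eventuallyEq ?_
    filter_upwards [eventually_lt_nhds hx] with y hy
    rw [if_pos hy.le]
  · rw [if_pos le_rfl]
    have hleft : HasDerivWithinAt (fun y => if y ≤ x then f y else g y) (f' x) (Iic x) x :=
      (hf x).hasDerivWithinAt.congr (fun y hy => if_pos hy) (if_pos le_rfl)
    have hright : HasDerivWithinAt (fun y => if y ≤ x then f y else g y) (f' x) (Ici x) x := by
      rw [hb']
      refine (hg x).hasDerivWithinAt.congr (fun y hy => ?_) (by rw [if_pos le_rfl, hb])
      rcases (mem_Ici.mp hy).eq_or_lt with rfl | hy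
      · rw [if_pos le_rfl, hb]
      · rw [if_neg (not_le.mpr hy)]
    simpa only [Iic_union_Ici, hasDerivWithinAt_univ] using hleft.union hright
  · rw [if_neg (not_le.mpr hx)]
    refine (hg x).congr_of_eventuallyEq ?_
    filter_upwards [eventually_gt_nhds hx] with y hy
    rw [if_neg (not_le.mpr hy)]

noncomputable def glue (a b : ℝ) (l f r : ℝ → ℝ) (x : ℝ) : ℝ :=
  if x < a then l x else if x ≤ b then f x else r x

theorem glue_eq_ite_le (hab : a ≤ b) (ha : l a = f a) :
    glue a b l f r = fun x => if x ≤ a then l x else if x ≤ b then f x else r x := by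
  funext x
  rcases lt_trichotomy x a with hx | rfl | hx
  · simp [glue, hx, hx.le]
  · simp [glue, hab, ha]
  · simp [glue, not_lt.mpr hx.le, not_le.mpr hx]

theorem hasDerivAt_glue (hab : a ≤ b) (hl : ∀ x, HasDerivAt l (l' x) x)
    (hf : ∀ x, HasDerivAt f (f' x) x) (hr : ∀ x, HasDerivAt r (r' x) x)
    (ha : l a = f a) (ha' : l' a = f' a) (hb : f b = r b) (hb' : f' b = r' b) (x : ℝ) :
    HasDerivAt (glue a b l f r) (glue a b l' f' r' x) x := by
  rw [glue_eq_ite_le hab ha, glue_eq_ite_le hab ha']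
  exact hasDerivAt_ite_le hl (hasDerivAt_ite_le hf hr hb hb') (by simp [hab, ha])
    (by simp [hab, ha']) x

theorem continuous_glue (hab : a ≤ b) (hl : Continuous l) (hf : Continuous f)
    (hr : Continuous r) (ha : l a = f a) (hb : f b = r b) : Continuous (glue a b l f r) := by
  rw [glue_eq_ite_le hab ha]
  refine hl.if_le (hf.if_le hr continuous_id continuous_const fun x hx => hx ▸ hb)
    continuous_id continuous_const fun x hx => ?_
  simp [hx, hab, ha]

end Gluing

theorem contDiff_two_of_hasDerivAt {u u' u'' : ℝ → ℝ} (hu : ∀ x, HasDerivAt u (u' x) x)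
    (hu' : ∀ x, HasDerivAt u' (u'' x) x) (hu'' : Continuous u'') : ContDiff ℝ 2 u := by
  have hd : deriv u = u' := funext fun x => (hu x).deriv
  have hd' : deriv u' = u'' := funext fun x => (hu' x).deriv
  rw [show (2 : WithTop ℕ∞) = 1 + 1 from rfl, contDiff_succ_iff_deriv, hd, contDiff_one_iff_deriv,
    hd']
  exact ⟨fun x => (hu x).differentiableAt, by simp, fun x => (hu' x).differentiableAt, hu''⟩

section InnerSolution

variable (δ κ μ A : ℝ)

noncomputable def innerSol (x : ℝ) : ℝ :=
  A * cosh (√(2 * δ) * x) + κ / δ * x ^ 2 + (κ + δ * μ) / δ ^ 2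

noncomputable def innerSolDeriv (x : ℝ) : ℝ :=
  A * √(2 * δ) * sinh (√(2 * δ) * x) + 2 * (κ / δ) * x

noncomputable def innerSolDeriv2 (x : ℝ) : ℝ :=
  A * (2 * δ) * cosh (√(2 * δ) * x) + 2 * (κ / δ)

variable {δ κ μ A}

theorem hasDerivAt_innerSol (x : ℝ) :
    HasDerivAt (innerSol δ κ μ A) (innerSolDeriv δ κ A x) x := by
  have := ((((hasDerivAt_id x).const_mul √(2 * δ)).cosh.const_mul A).add
    ((hasDerivAt_pow 2 x).const_mul (κ / δ))).add_const ((κ + δ * μ) / δ ^ 2)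
  refine this.congr_deriv ?_
  simp only [innerSolDeriv, id]
  push_cast
  ring

theorem hasDerivAt_innerSolDeriv (hδ : 0 ≤ δ) (x : ℝ) :
    HasDerivAt (innerSolDeriv δ κ A) (innerSolDeriv2 δ κ A x) x := by
  have := (((hasDerivAt_id x).const_mul √(2 * δ)).sinh.const_mul (A * √(2 * δ))).add
    ((hasDerivAt_id x).const_mul (2 * (κ / δ)))
  refine this.congr_deriv ?_
  simp only [innerSolDeriv2, id]
  linear_combination (A * cosh (√(2 * δ) * x)) * mul_self_sqrt (by linarith : (0:ℝ) ≤ 2 * δ)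

theorem continuous_innerSolDeriv2 : Continuous (innerSolDeriv2 δ κ A) := by
  unfold innerSolDeriv2; fun_prop

theorem innerSol_neg (x : ℝ) : innerSol δ κ μ A (-x) = innerSol δ κ μ A x := by
  simp [innerSol]

theorem innerSolDeriv_neg (x : ℝ) : innerSolDeriv δ κ A (-x) = -innerSolDeriv δ κ A x := by
  simp only [innerSolDeriv, mul_neg, sinh_neg]; ring

theorem innerSolDeriv2_neg (x : ℝ) : innerSolDeriv2 δ κ A (-x) = innerSolDeriv2 δ κ A x := by
  simp [innerSolDeriv2]

theorem innerSol_ode (hδ : δ ≠ 0) (x : ℝ) :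
    1 / 2 * innerSolDeriv2 δ κ A x - δ * innerSol δ κ μ A x + κ * x ^ 2 + μ = 0 := by
  simp only [innerSolDeriv2, innerSol]
  field_simp
  ring

end InnerSolution

section SmoothFit

variable {δ κ A β : ℝ}

theorem innerSolDeriv2_eq_zero (hδ : δ ≠ 0) (hA : A = -κ / (δ ^ 2 * cosh (√(2 * δ) * β))) :
    innerSolDeriv2 δ κ A β = 0 := by
  have := (cosh_pos (√(2 * δ) * β)).ne'
  rw [innerSolDeriv2, hA]
  field_simp
  ring

theorem innerSolDeriv_eq_one (hδ : 0 < δ) (hκ : κ ≠ 0)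
    (hA : A = -κ / (δ ^ 2 * cosh (√(2 * δ) * β)))
    (heq : tanh (√(2 * δ) * β) = δ * (2 * κ * β - δ) / (κ * √(2 * δ))) :
    innerSolDeriv δ κ A β = 1 := by
  have hc : √(2 * δ) ≠ 0 := (sqrt_pos.mpr (by positivity)).ne'
  have hsinh : sinh (√(2 * δ) * β) = tanh (√(2 * δ) * β) * cosh (√(2 * δ) * β) := by
    rw [tanh_eq_sinh_div_cosh, div_mul_cancel₀ _ (cosh_pos _).ne']
  have := (cosh_pos (√(2 * δ) * β)).ne'
  rw [innerSolDeriv, hsinh, heq, hA]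
  field_simp
  ring

theorem lt_two_mul_mul_of_tanh_eq (hδ : 0 < δ) (hκ : 0 < κ) (hβ : 0 < β)
    (heq : tanh (√(2 * δ) * β) = δ * (2 * κ * β - δ) / (κ * √(2 * δ))) : δ < 2 * κ * β := by
  have htanh : 0 < tanh (√(2 * δ) * β) := by
    rw [tanh_eq_sinh_div_cosh]
    exact div_pos (sinh_pos_iff.mpr (by positivity)) (cosh_pos _)
  rw [heq, div_pos_iff_of_pos_right (by positivity)] at htanh
  linarith [pos_of_mul_pos_right htanh hδ.le]

theorem innerSolDeriv2_nonneg (hδ : 0 < δ) (hκ : 0 < κ)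
    (hA : A = -κ / (δ ^ 2 * cosh (√(2 * δ) * β))) {x : ℝ} (hx : |x| ≤ β) :
    0 ≤ innerSolDeriv2 δ κ A x := by
  have hA0 : A < 0 := by
    rw [hA]
    exact div_neg_of_neg_of_pos (neg_neg_of_pos hκ) (by positivity)
  have hcosh : cosh (√(2 * δ) * x) ≤ cosh (√(2 * δ) * β) := by
    rw [cosh_le_cosh, abs_mul, abs_mul, abs_of_nonneg (sqrt_nonneg _)]
    exact mul_le_mul_of_nonneg_left (hx.trans (le_abs_self β)) (sqrt_nonneg _)
  have := mul_le_mul_of_nonpos_left hcosh (by nlinarith : A * (2 * δ) ≤ 0)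
  have h0 := innerSolDeriv2_eq_zero hδ.ne' hA
  unfold innerSolDeriv2 at h0 ⊢
  linarith

theorem abs_innerSolDeriv_le_one (hδ : 0 < δ) (hκ : 0 < κ)
    (hA : A = -κ / (δ ^ 2 * cosh (√(2 * δ) * β)))
    (heq : tanh (√(2 * δ) * β) = δ * (2 * κ * β - δ) / (κ * √(2 * δ))) {x : ℝ} (hx : |x| ≤ β) :
    |innerSolDeriv δ κ A x| ≤ 1 := by
  have hmono : MonotoneOn (innerSolDeriv δ κ A) (Icc (-β) β) := by
    refine monotoneOn_of_hasDerivWithinAt_nonneg (convex_Icc _ _)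
      (fun y _ => (hasDerivAt_innerSolDeriv hδ.le y).continuousAt.continuousWithinAt)
      (fun y _ => (hasDerivAt_innerSolDeriv hδ.le y).hasDerivWithinAt) fun y hy => ?_
    rw [interior_Icc] at hy
    exact innerSolDeriv2_nonneg hδ hκ hA (abs_le.mpr ⟨hy.1.le, hy.2.le⟩)
  have h1 := innerSolDeriv_eq_one hδ hκ.ne' hA heq
  obtain ⟨hl, hr⟩ := abs_le.mp hx
  have hβ : -β ≤ β := hl.trans hr
  refine abs_le.mpr ⟨?_, ?_⟩
  · calc -1 = innerSolDeriv δ κ A (-β) := by rw [innerSolDeriv_neg, h1]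
      _ ≤ innerSolDeriv δ κ A x := hmono ⟨le_rfl, hβ⟩ ⟨hl, hr⟩ hl
  · calc innerSolDeriv δ κ A x ≤ innerSolDeriv δ κ A β := hmono ⟨hl, hr⟩ ⟨hβ, le_rfl⟩ hr
      _ = 1 := h1

end SmoothFit

section Candidate

variable (δ κ μ A β : ℝ)

noncomputable def candidate : ℝ → ℝ :=
  glue (-β) β (fun x => -x - β + innerSol δ κ μ A β) (innerSol δ κ μ A)
    (fun x => x - β + innerSol δ κ μ A β)

noncomputable def candidateDeriv : ℝ → ℝ :=
  glue (-β) β (fun _ => -1) (innerSolDeriv δ κ A) (fun _ => 1)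

noncomputable def candidateDeriv2 : ℝ → ℝ :=
  glue (-β) β (fun _ => 0) (innerSolDeriv2 δ κ A) (fun _ => 0)

variable {δ κ μ A β}

theorem candidate_eq (hβ : 0 ≤ β) (x : ℝ) : candidate δ κ μ A β x =
    if |x| ≤ β then innerSol δ κ μ A x else |x| - β + innerSol δ κ μ A β := by
  unfold candidate glue
  rcases lt_or_ge x (-β) with hx | hx
  · rw [if_pos hx, if_neg (by rw [abs_of_neg (by linarith)]; linarith), abs_of_neg (by linarith)]
  rcases le_or_gt x β with hx' | hx'
  · rw [if_neg (not_lt.mpr hx), if_pos hx', if_pos (abs_le.mpr ⟨hx, hx'⟩)]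
  · rw [if_neg (not_lt.mpr hx), if_neg (not_le.mpr hx'),
      if_neg (by rw [abs_of_pos (by linarith)]; linarith), abs_of_pos (by linarith)]

theorem candidateDeriv2_of_abs_le {x : ℝ} (hx : |x| ≤ β) :
    candidateDeriv2 δ κ A β x = innerSolDeriv2 δ κ A x := by
  obtain ⟨hl, hr⟩ := abs_le.mp hx
  simp [candidateDeriv2, glue, not_lt.mpr hl, hr]

theorem candidateDeriv_of_abs_le {x : ℝ} (hx : |x| ≤ β) :
    candidateDeriv δ κ A β x = innerSolDeriv δ κ A x := by
  obtain ⟨hl, hr⟩ := abs_le.mp hx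
  simp [candidateDeriv, glue, not_lt.mpr hl, hr]

theorem candidateDeriv2_of_lt_abs {x : ℝ} (hx : β < |x|) : candidateDeriv2 δ κ A β x = 0 := by
  unfold candidateDeriv2 glue
  split_ifs with hl hr
  · rfl
  · exact absurd (abs_le.mpr ⟨not_lt.mp hl, hr⟩) hx.not_ge
  · rfl

theorem abs_candidateDeriv_of_lt_abs {x : ℝ} (hx : β < |x|) :
    |candidateDeriv δ κ A β x| = 1 := by
  unfold candidateDeriv glue
  split_ifs with hl hr
  · simp
  · exact absurd (abs_le.mpr ⟨not_lt.mp hl, hr⟩) hx.not_ge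
  · simp

theorem hasDerivAt_candidate (hβ : 0 ≤ β) (h1 : innerSolDeriv δ κ A β = 1) (x : ℝ) :
    HasDerivAt (candidate δ κ μ A β) (candidateDeriv δ κ A β x) x :=
  hasDerivAt_glue (by linarith) (fun y => ((hasDerivAt_neg y).sub_const β).add_const _)
    hasDerivAt_innerSol (fun y => ((hasDerivAt_id y).sub_const β).add_const _)
    (by simp [innerSol_neg]) (by simp [innerSolDeriv_neg, h1]) (by simp) (by simp [h1]) x

theorem hasDerivAt_candidateDeriv (hδ : 0 ≤ δ) (hβ : 0 ≤ β) (h1 : innerSolDeriv δ κ A β = 1)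
    (h2 : innerSolDeriv2 δ κ A β = 0) (x : ℝ) :
    HasDerivAt (candidateDeriv δ κ A β) (candidateDeriv2 δ κ A β x) x :=
  hasDerivAt_glue (by linarith) (fun y => hasDerivAt_const y _) (hasDerivAt_innerSolDeriv hδ)
    (fun y => hasDerivAt_const y _) (by simp [innerSolDeriv_neg, h1])
    (by simp [innerSolDeriv2_neg, h2]) (by simp [h1]) (by simp [h2]) x

theorem continuous_candidateDeriv2 (hβ : 0 ≤ β) (h2 : innerSolDeriv2 δ κ A β = 0) :
    Continuous (candidateDeriv2 δ κ A β) :=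
  continuous_glue (by linarith) continuous_const continuous_innerSolDeriv2 continuous_const
    (by simp [innerSolDeriv2_neg, h2]) (by simp [h2])

end Candidate

section HJB

variable {δ κ μ A β : ℝ}

theorem candidate_hjb_eq_zero (hδ : δ ≠ 0) (hβ : 0 ≤ β) {x : ℝ} (hx : |x| ≤ β) :
    1 / 2 * candidateDeriv2 δ κ A β x - δ * candidate δ κ μ A β x + κ * x ^ 2 + μ = 0 := by
  rw [candidateDeriv2_of_abs_le hx, candidate_eq hβ, if_pos hx]
  exact innerSol_ode hδ x

theorem candidate_hjb_nonneg (hδ : δ ≠ 0) (hκ : 0 ≤ κ) (hβ : 0 ≤ β)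
    (h2 : innerSolDeriv2 δ κ A β = 0) (hδκβ : δ < 2 * κ * β) {x : ℝ} (hx : β ≤ |x|) :
    0 ≤ 1 / 2 * candidateDeriv2 δ κ A β x - δ * candidate δ κ μ A β x + κ * x ^ 2 + μ := by
  rcases hx.eq_or_lt with hx | hx
  · exact (candidate_hjb_eq_zero hδ hβ hx.ge).ge
  have hvβ : δ * innerSol δ κ μ A β = κ * β ^ 2 + μ := by
    linarith [innerSol_ode (κ := κ) (μ := μ) (A := A) hδ β]
  rw [candidateDeriv2_of_lt_abs hx, candidate_eq hβ, if_neg (not_le.mpr hx), ← sq_abs x]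
  -- the left side is `(|x| - β) (κ (|x| + β) - δ)`
  nlinarith [mul_nonneg (sub_nonneg.mpr hx.le) (by nlinarith : 0 ≤ κ * (|x| + β) - δ)]

end HJB

theorem statement3_general (δ κ μ β A : ℝ) (hδ : 0 < δ) (hκ : 0 < κ) (hβ : 0 < β)
    (heq : Real.tanh (Real.sqrt (2*δ) * β) = δ * (2*κ*β - δ) / (κ * Real.sqrt (2*δ)))
    (hA : A = -κ / (δ^2 * Real.cosh (Real.sqrt (2*δ) * β)))
    (u : ℝ → ℝ)
    (hu : ∀ x : ℝ, u x =
      if |x| ≤ β then A * Real.cosh (Real.sqrt (2*δ) * x) + (κ/δ) * x^2 + (κ + δ*μ)/δ^2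
      else |x| - β + (A * Real.cosh (Real.sqrt (2*δ) * β) + (κ/δ) * β^2 + (κ + δ*μ)/δ^2)) :
    ContDiff ℝ 2 u ∧
    (∀ x : ℝ, |deriv u x| ≤ 1) ∧
    (∀ x : ℝ, |x| ≤ β → (1/2) * deriv (deriv u) x - δ * u x + κ * x^2 + μ = 0) ∧
    (∀ x : ℝ, β ≤ |x| → 0 ≤ (1/2) * deriv (deriv u) x - δ * u x + κ * x^2 + μ) ∧
    (∀ x : ℝ, min ((1/2) * deriv (deriv u) x - δ * u x + κ * x^2 + μ) (1 - |deriv u x|) = 0) := by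
  have h1 := innerSolDeriv_eq_one hδ hκ.ne' hA heq
  have h2 := innerSolDeriv2_eq_zero hδ.ne' hA
  have hδκβ := lt_two_mul_mul_of_tanh_eq hδ hκ hβ heq
  obtain rfl : u = candidate δ κ μ A β := funext fun x => (hu x).trans (candidate_eq hβ.le x).symm
  have hu' := hasDerivAt_candidate (μ := μ) hβ.le h1
  have hu'' := hasDerivAt_candidateDeriv hδ.le hβ.le h1 h2
  rw [show deriv (candidate δ κ μ A β) = _ from funext fun x => (hu' x).deriv,
    show deriv (candidateDeriv δ κ A β) = _ from funext fun x => (hu'' x).deriv]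
  have hbound (x : ℝ) : |candidateDeriv δ κ A β x| ≤ 1 := by
    rcases le_or_gt |x| β with hx | hx
    · exact (candidateDeriv_of_abs_le hx).symm ▸ abs_innerSolDeriv_le_one hδ hκ hA heq hx
    · exact (abs_candidateDeriv_of_lt_abs hx).le
  refine ⟨contDiff_two_of_hasDerivAt hu' hu'' (continuous_candidateDeriv2 hβ.le h2), hbound,
    fun x hx => candidate_hjb_eq_zero hδ.ne' hβ.le hx,
    fun x hx => candidate_hjb_nonneg hδ.ne' hκ.le hβ.le h2 hδκβ hx, fun x => ?_⟩
  rcases le_or_gt |x| β with hx | hx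
  · rw [candidate_hjb_eq_zero hδ.ne' hβ.le hx]
    exact min_eq_left (sub_nonneg.mpr (hbound x))
  · rw [abs_candidateDeriv_of_lt_abs hx, sub_self]
    exact min_eq_right (candidate_hjb_nonneg hδ.ne' hκ.le hβ.le h2 hδκβ hx.le)

/-- With `β` the unique positive root of the free-boundary equation,
`A = −κ/(δ² cosh(√(2δ)β))` and `u` defined piecewise (the smooth-fit candidate),
`u` is `C²`, `|u'| ≤ 1` everywhere, the ODE `(1/2)u'' − δu + κx² + μ = 0` holds for
`|x| ≤ β`, the inequality `(1/2)u'' − δu + κx² + μ ≥ 0` holds for `|x| ≥ β`, and hence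
`min{(1/2)u'' − δu + κx² + μ, 1 − |u'|} = 0` everywhere. -/
theorem statement3 (δ κ μ β A : ℝ) (hδ : 0 < δ) (hκ : 0 < κ) (hμ : 0 ≤ μ) (hβ : 0 < β)
    (heq : Real.tanh (Real.sqrt (2*δ) * β) = δ * (2*κ*β - δ) / (κ * Real.sqrt (2*δ)))
    (hA : A = -κ / (δ^2 * Real.cosh (Real.sqrt (2*δ) * β)))
    (u : ℝ → ℝ)
    (hu : ∀ x : ℝ, u x =
      if |x| ≤ β then A * Real.cosh (Real.sqrt (2*δ) * x) + (κ/δ) * x^2 + (κ + δ*μ)/δ^2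
      else |x| - β + (A * Real.cosh (Real.sqrt (2*δ) * β) + (κ/δ) * β^2 + (κ + δ*μ)/δ^2)) :
    ContDiff ℝ 2 u ∧
    (∀ x : ℝ, |deriv u x| ≤ 1) ∧
    (∀ x : ℝ, |x| ≤ β → (1/2) * deriv (deriv u) x - δ * u x + κ * x^2 + μ = 0) ∧
    (∀ x : ℝ, β ≤ |x| → 0 ≤ (1/2) * deriv (deriv u) x - δ * u x + κ * x^2 + μ) ∧
    (∀ x : ℝ, min ((1/2) * deriv (deriv u) x - δ * u x + κ * x^2 + μ) (1 - |deriv u x|) = 0) :=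
  statement3_general δ κ μ β A hδ hκ hβ heq hA u hu
end

section
/- Let δ, κ, λ > 0 and μ ≥ 0 with δλ − κ > 0, set s = √((κ + δμ)/(δ(δλ − κ))), and let α be the unique solution in (0, ∞) of tanh(√(2δ)·α) = √(2δ)(δλ − κ)α / (δ(δλ − κ)α² − (κ + δμ)). Then tanh(√(2δ)x) − √(2δ)(δλ − κ)x/(δ(δλ − κ)x² − (κ + δμ)) > 0 for all x ∈ (0, s) ∪ (α, ∞), and tanh(√(2δ)x) − √(2δ)(δλ − κ)x/(δ(δλ − κ)x² − (κ + δμ)) < 0 for all x ∈ (s, α). -/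
lemma tanh_strictMono' : StrictMono Real.tanh := by
  intro x y hxy
  rw [Real.tanh_eq_sinh_div_cosh, Real.tanh_eq_sinh_div_cosh,
    div_lt_div_iff₀ (Real.cosh_pos x) (Real.cosh_pos y)]
  have h1 : Real.sinh (y - x) = Real.sinh y * Real.cosh x - Real.cosh y * Real.sinh x :=
    Real.sinh_sub y x
  have h2 : 0 < Real.sinh (y - x) := Real.sinh_pos_iff.2 (by linarith)
  linarith

lemma tanh_pos' {x : ℝ} (hx : 0 < x) : 0 < Real.tanh x := by
  have := tanh_strictMono' hx
  simpa [Real.tanh_zero] using this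

/-- With `s = √((κ + δμ)/(δ(δλ − κ)))` and `α` the unique positive root of the
free-boundary equation, the function
`x ↦ tanh(√(2δ)x) − √(2δ)(δλ − κ)x/(δ(δλ − κ)x² − (κ + δμ))` is positive on
`(0, s) ∪ (α, ∞)` and negative on `(s, α)`. -/
theorem statement6 (δ κ lam μ α : ℝ) (hδ : 0 < δ) (hκ : 0 < κ) (hlam : 0 < lam)
    (hμ : 0 ≤ μ) (h : 0 < δ*lam - κ) (hα : 0 < α)
    (heq : Real.tanh (Real.sqrt (2*δ) * α) =
      Real.sqrt (2*δ) * (δ*lam - κ) * α / (δ*(δ*lam - κ)*α^2 - (κ + δ*μ))) :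
    (∀ x : ℝ, (0 < x ∧ x < Real.sqrt ((κ + δ*μ)/(δ*(δ*lam - κ)))) ∨ α < x →
      0 < Real.tanh (Real.sqrt (2*δ) * x) -
        Real.sqrt (2*δ) * (δ*lam - κ) * x / (δ*(δ*lam - κ)*x^2 - (κ + δ*μ))) ∧
    (∀ x : ℝ, Real.sqrt ((κ + δ*μ)/(δ*(δ*lam - κ))) < x → x < α →
      Real.tanh (Real.sqrt (2*δ) * x) -
        Real.sqrt (2*δ) * (δ*lam - κ) * x / (δ*(δ*lam - κ)*x^2 - (κ + δ*μ)) < 0) := by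
  set b := δ*lam - κ with hb
  set k := κ + δ*μ with hk
  have hkpos : 0 < k := by positivity
  have hc : 0 < Real.sqrt (2*δ) := Real.sqrt_pos.2 (by linarith)
  set c := Real.sqrt (2*δ) with hcdef
  set s := Real.sqrt (k/(δ*b)) with hs
  have hdb : 0 < δ * b := by positivity
  have hs_sq : s^2 = k/(δ*b) := Real.sq_sqrt (by positivity)
  -- characterization: for x > 0, x > s ↔ denominator positive
  have hden_pos : ∀ x : ℝ, s < x → 0 < δ*b*x^2 - k := by
    intro x hx
    have hx0 : 0 ≤ s := Real.sqrt_nonneg _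
    have : s^2 < x^2 := by nlinarith
    rw [hs_sq] at this
    have := (div_lt_iff₀ hdb).1 this
    nlinarith
  have hden_neg : ∀ x : ℝ, 0 < x → x < s → δ*b*x^2 - k < 0 := by
    intro x hx0 hx
    have : x^2 < s^2 := by nlinarith [Real.sqrt_nonneg (k/(δ*b))]
    rw [hs_sq] at this
    have := (lt_div_iff₀ hdb).1 this
    nlinarith
  -- α > s
  have hαden : 0 < δ*b*α^2 - k := by
    by_contra hle
    push_neg at hle
    have htp : 0 < Real.tanh (c*α) := tanh_pos' (by positivity)
    rcases lt_or_eq_of_le hle with hlt | he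
    · have : c * b * α / (δ*b*α^2 - k) < 0 :=
        div_neg_of_pos_of_neg (by positivity) hlt
      linarith [heq ▸ this]
    · rw [heq, he, div_zero] at htp; exact lt_irrefl 0 htp
  have hsα : s < α := by
    rcases lt_trichotomy s α with h1 | h1 | h1
    · exact h1
    · exfalso; rw [← h1] at hαden
      rw [hs_sq] at *
      have : δ*b*(k/(δ*b)) = k := by field_simp
      nlinarith [hαden, this]
    · exfalso; exact absurd hαden (not_lt.2 (le_of_lt (hden_neg α hα h1)))
  -- strict monotonicity of f on (s, ∞)
  have hmono : ∀ x y : ℝ, s < x → x < y →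
      Real.tanh (c*x) - c*b*x/(δ*b*x^2 - k) < Real.tanh (c*y) - c*b*y/(δ*b*y^2 - k) := by
    intro x y hsx hxy
    have hx0 : 0 < x := lt_of_le_of_lt (Real.sqrt_nonneg _) hsx
    have hdx : 0 < δ*b*x^2 - k := hden_pos x hsx
    have hdy : 0 < δ*b*y^2 - k := hden_pos y (lt_trans hsx hxy)
    have ht : Real.tanh (c*x) < Real.tanh (c*y) :=
      tanh_strictMono' (by nlinarith)
    have hr : c*b*y/(δ*b*y^2 - k) < c*b*x/(δ*b*x^2 - k) := by
      have hy0 : 0 < y := lt_trans hx0 hxy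
      rw [div_lt_div_iff₀ hdy hdx]
      nlinarith [mul_pos (mul_pos (mul_pos hc h) (sub_pos.2 hxy))
        (by positivity : (0:ℝ) < δ*b*x*y + k)]
    linarith
  have hfα : Real.tanh (c*α) - c*b*α/(δ*b*α^2 - k) = 0 := by
    rw [heq]; ring
  constructor
  · rintro x (⟨hx0, hxs⟩ | hxα)
    · have hdx := hden_neg x hx0 hxs
      have : c*b*x/(δ*b*x^2 - k) < 0 := div_neg_of_pos_of_neg (by positivity) hdx
      have htp : 0 < Real.tanh (c*x) := tanh_pos' (by positivity)
      linarith
    · have := hmono α x hsα hxα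
      linarith
  · intro x hsx hxα
    have := hmono x α hsx hxα
    linarith
end

section
/- Let δ, κ, λ > 0 and μ ≥ 0 with δλ − κ > 0, let α be the unique solution in (0, ∞) of tanh(√(2δ)·α) = √(2δ)(δλ − κ)α / (δ(δλ − κ)α² − (κ + δμ)), and set A = (δ(δλ − κ)α² − (κ + δμ))/(δ² cosh(√(2δ)α)). Then A cosh(√(2δ)x) + (κ/δ)x² + (κ + δμ)/δ² ≥ λx² for all x ∈ [0, α]; equivalently, the function f(x) = (δ(δλ − κ)x² − (κ + δμ))/cosh(√(2δ)x) satisfies f(x) ≤ f(α) for all x ∈ [0, α]. -/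
/-!
Write `c = √(2δ)`, `b = δ(δλ − κ)`, `d = κ + δμ` and `K = (bα² − d)/cosh(cα)`, so that both claims
say `bx² − d ≤ K cosh(cx)` on `[0, α]`, with equality at `x = α` (value matching). The free-boundary
equation forces `K > 0` and is exactly the smooth-fit condition `K c sinh(cα) = 2bα`. Hence the
derivative `h(t) = K c sinh(ct) − 2bt` of `g(t) = K cosh(ct) − bt²` vanishes at `0` and at `α`; being
convex on `[0, ∞)`, `h` is nonpositive in between, so `g` decreases on `[0, α]` and `g(x) ≥ g(α) = −d`.
-/

open Real Set

section SmoothFit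

variable {K c b : ℝ}

lemma hasDerivAt_mul_sinh_sub_mul (t : ℝ) :
    HasDerivAt (fun t => K * c * sinh (c * t) - 2 * b * t) (K * c * c * cosh (c * t) - 2 * b) t := by
  have := ((((hasDerivAt_id t).const_mul c).sinh).const_mul (K * c)).sub
    ((hasDerivAt_id t).const_mul (2 * b))
  exact this.congr_deriv (by simp only [id]; ring)

lemma hasDerivAt_mul_cosh_sub_mul_sq (t : ℝ) :
    HasDerivAt (fun t => K * cosh (c * t) - b * t ^ 2) (K * c * sinh (c * t) - 2 * b * t) t := by
  have := ((((hasDerivAt_id t).const_mul c).cosh).const_mul K).sub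
    ((hasDerivAt_pow 2 t).const_mul b)
  exact this.congr_deriv (by simp only [id]; ring)

lemma convexOn_mul_sinh_sub_mul (hK : 0 ≤ K) (hc : 0 ≤ c) :
    ConvexOn ℝ (Ici 0) fun t => K * c * sinh (c * t) - 2 * b * t := by
  refine MonotoneOn.convexOn_of_deriv (convex_Ici 0) (by fun_prop)
    (fun t _ => (hasDerivAt_mul_sinh_sub_mul t).differentiableAt.differentiableWithinAt) ?_
  intro s hs t ht hst
  rw [interior_Ici] at hs ht
  simp only [(hasDerivAt_mul_sinh_sub_mul _).deriv]
  have : cosh (c * s) ≤ cosh (c * t) := by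
    rw [cosh_le_cosh, abs_of_nonneg (mul_nonneg hc (le_of_lt hs)),
      abs_of_nonneg (mul_nonneg hc (le_of_lt ht))]
    exact mul_le_mul_of_nonneg_left hst hc
  gcongr

lemma antitoneOn_mul_cosh_sub_mul_sq (hK : 0 ≤ K) (hc : 0 ≤ c) {α : ℝ}
    (hsmooth : K * c * sinh (c * α) = 2 * b * α) :
    AntitoneOn (fun t => K * cosh (c * t) - b * t ^ 2) (Icc 0 α) := by
  refine antitoneOn_of_deriv_nonpos (convex_Icc 0 α) (by fun_prop)
    (fun t _ => (hasDerivAt_mul_cosh_sub_mul_sq t).differentiableAt.differentiableWithinAt) ?_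
  intro t ht
  rw [interior_Icc] at ht
  rw [(hasDerivAt_mul_cosh_sub_mul_sq t).deriv]
  have h0 : (0 : ℝ) ∈ Ici 0 := mem_Ici.2 le_rfl
  have hα : α ∈ Ici 0 := ht.1.le.trans ht.2.le
  have := (convexOn_mul_sinh_sub_mul (b := b) hK hc).le_on_segment h0 hα
    (by rw [segment_eq_Icc hα]; exact Ioo_subset_Icc_self ht)
  simpa [hsmooth] using this

lemma sq_sub_le_mul_cosh_of_smooth_fit (hK : 0 ≤ K) (hc : 0 ≤ c) {α d x : ℝ}
    (hvalue : K * cosh (c * α) = b * α ^ 2 - d) (hsmooth : K * c * sinh (c * α) = 2 * b * α)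
    (hx : x ∈ Icc 0 α) :
    b * x ^ 2 - d ≤ K * cosh (c * x) := by
  have := antitoneOn_mul_cosh_sub_mul_sq hK hc hsmooth hx (right_mem_Icc.2 (hx.1.trans hx.2)) hx.2
  simp only at this
  linarith

end SmoothFit

lemma smooth_fit_of_tanh_eq {c a α D : ℝ} (hc : 0 < c) (ha : 0 < a) (hα : 0 < α)
    (heq : tanh (c * α) = c * a * α / D) :
    0 < D ∧ D / cosh (c * α) * c * sinh (c * α) = c ^ 2 * a * α := by
  have hcosh := cosh_pos (c * α)
  have htanh : 0 < tanh (c * α) := by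
    rw [tanh_eq_sinh_div_cosh]
    exact div_pos (sinh_pos_iff.2 (by positivity)) hcosh
  have hD : 0 < D := by
    rw [heq] at htanh
    exact (div_pos_iff_of_pos_left (by positivity)).1 htanh
  refine ⟨hD, ?_⟩
  rw [tanh_eq_sinh_div_cosh, div_eq_div_iff hcosh.ne' hD.ne'] at heq
  rw [div_mul_eq_mul_div, div_mul_eq_mul_div, div_eq_iff hcosh.ne']
  linear_combination c * heq

theorem statement8_general (δ κ lam μ α A : ℝ) (hδ : 0 < δ)
    (h : 0 < δ*lam - κ) (hα : 0 < α)
    (heq : Real.tanh (Real.sqrt (2*δ) * α) =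
      Real.sqrt (2*δ) * (δ*lam - κ) * α / (δ*(δ*lam - κ)*α^2 - (κ + δ*μ)))
    (hA : A = (δ*(δ*lam - κ)*α^2 - (κ + δ*μ)) / (δ^2 * Real.cosh (Real.sqrt (2*δ) * α))) :
    (∀ x : ℝ, 0 ≤ x → x ≤ α →
      lam * x^2 ≤ A * Real.cosh (Real.sqrt (2*δ) * x) + (κ/δ) * x^2 + (κ + δ*μ)/δ^2) ∧
    (∀ x : ℝ, 0 ≤ x → x ≤ α →
      (δ*(δ*lam - κ)*x^2 - (κ + δ*μ)) / Real.cosh (Real.sqrt (2*δ) * x) ≤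
        (δ*(δ*lam - κ)*α^2 - (κ + δ*μ)) / Real.cosh (Real.sqrt (2*δ) * α)) := by
  set c := √(2 * δ)
  have hc : 0 < c := sqrt_pos.2 (by positivity)
  have hc2 : c ^ 2 = 2 * δ := sq_sqrt (by positivity)
  obtain ⟨hD, hfit⟩ := smooth_fit_of_tanh_eq hc h hα heq
  set K := (δ*(δ*lam - κ)*α^2 - (κ + δ*μ)) / cosh (c * α)
  have hcoshα := cosh_pos (c * α)
  have hbound : ∀ x, 0 ≤ x → x ≤ α → δ*(δ*lam - κ)*x^2 - (κ + δ*μ) ≤ K * cosh (c * x) :=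
    fun x hx0 hxα => sq_sub_le_mul_cosh_of_smooth_fit (div_pos hD hcoshα).le hc.le
      (div_mul_cancel₀ _ hcoshα.ne') (by rw [hfit, hc2]; ring) ⟨hx0, hxα⟩
  refine ⟨fun x hx0 hxα => ?_, fun x hx0 hxα => ?_⟩
  · have hgap : A * cosh (c * x) + κ / δ * x ^ 2 + (κ + δ * μ) / δ ^ 2 - lam * x ^ 2
        = (K * cosh (c * x) - (δ*(δ*lam - κ)*x^2 - (κ + δ*μ))) / δ ^ 2 := by
      simp only [hA, K]; field_simp; ring
    have := div_nonneg (sub_nonneg.2 (hbound x hx0 hxα)) (sq_nonneg δ)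
    linarith
  · rw [div_le_iff₀ (cosh_pos _)]
    exact hbound x hx0 hxα

/-- With `α` the unique positive root of the free-boundary equation and
`A = (δ(δλ − κ)α² − (κ + δμ))/(δ² cosh(√(2δ)α))`, one has
`A cosh(√(2δ)x) + (κ/δ)x² + (κ + δμ)/δ² ≥ λx²` for all `x ∈ [0, α]`; equivalently,
`f(x) = (δ(δλ − κ)x² − (κ + δμ))/cosh(√(2δ)x)` satisfies `f(x) ≤ f(α)` on `[0, α]`. -/
theorem statement8 (δ κ lam μ α A : ℝ) (hδ : 0 < δ) (hκ : 0 < κ) (hlam : 0 < lam)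
    (hμ : 0 ≤ μ) (h : 0 < δ*lam - κ) (hα : 0 < α)
    (heq : Real.tanh (Real.sqrt (2*δ) * α) =
      Real.sqrt (2*δ) * (δ*lam - κ) * α / (δ*(δ*lam - κ)*α^2 - (κ + δ*μ)))
    (hA : A = (δ*(δ*lam - κ)*α^2 - (κ + δ*μ)) / (δ^2 * Real.cosh (Real.sqrt (2*δ) * α))) :
    (∀ x : ℝ, 0 ≤ x → x ≤ α →
      lam * x^2 ≤ A * Real.cosh (Real.sqrt (2*δ) * x) + (κ/δ) * x^2 + (κ + δ*μ)/δ^2) ∧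
    (∀ x : ℝ, 0 ≤ x → x ≤ α →
      (δ*(δ*lam - κ)*x^2 - (κ + δ*μ)) / Real.cosh (Real.sqrt (2*δ) * x) ≤
        (δ*(δ*lam - κ)*α^2 - (κ + δ*μ)) / Real.cosh (Real.sqrt (2*δ) * α)) :=
  statement8_general δ κ lam μ α A hδ h hα heq hA
end

section
/- Let δ, κ, λ > 0 and μ ≥ 0 with δλ − κ > 0, and let α be the unique solution in (0, ∞) of tanh(√(2δ)·α) = √(2δ)(δλ − κ)α / (δ(δλ − κ)α² − (κ + δμ)). Then α > √((λ + μ)/(δλ − κ)); consequently λ − (δλ − κ)x² + μ ≤ 0 for all x ≥ α. -/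
lemma tanh_lt_self {t : ℝ} (ht : 0 < t) : Real.tanh t < t := by
  have key : Real.sinh t < t * Real.cosh t := by
    have hmono : StrictMonoOn (fun s : ℝ => s * Real.cosh s - Real.sinh s) (Set.Ici 0) := by
      apply strictMonoOn_of_deriv_pos (convex_Ici 0)
      · fun_prop
      · intro x hx
        rw [interior_Ici] at hx
        have hd : HasDerivAt (fun s : ℝ => s * Real.cosh s - Real.sinh s)
            (1 * Real.cosh x + x * Real.sinh x - Real.cosh x) x := by
          exact ((hasDerivAt_id x).mul (Real.hasDerivAt_cosh x)).sub (Real.hasDerivAt_sinh x)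
        rw [hd.deriv]
        have hx' : 0 < x := hx
        have hsx : 0 < Real.sinh x := Real.sinh_pos_iff.mpr hx'
        nlinarith [mul_pos hx' hsx]
    have := hmono (Set.self_mem_Ici) (Set.mem_Ici.mpr ht.le) ht
    simpa using this
  rw [Real.tanh_eq_sinh_div_cosh, div_lt_iff₀ (Real.cosh_pos t)]
  exact key

/-- With `α` the unique positive root of the free-boundary equation of the
discretionary stopping problem, `α > √((λ + μ)/(δλ − κ))`; consequently
`λ − (δλ − κ)x² + μ ≤ 0` for all `x ≥ α`. -/
theorem statement9 (δ κ lam μ α : ℝ) (hδ : 0 < δ) (hκ : 0 < κ) (hlam : 0 < lam)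
    (hμ : 0 ≤ μ) (h : 0 < δ*lam - κ) (hα : 0 < α)
    (heq : Real.tanh (Real.sqrt (2*δ) * α) =
      Real.sqrt (2*δ) * (δ*lam - κ) * α / (δ*(δ*lam - κ)*α^2 - (κ + δ*μ))) :
    Real.sqrt ((lam + μ)/(δ*lam - κ)) < α ∧
    (∀ x : ℝ, α ≤ x → lam - (δ*lam - κ)*x^2 + μ ≤ 0) := by
  set t := Real.sqrt (2*δ) * α with htdef
  have hs : 0 < Real.sqrt (2*δ) := Real.sqrt_pos.mpr (by linarith)
  have ht : 0 < t := mul_pos hs hα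
  have htanh_pos : 0 < Real.tanh t := by
    rw [Real.tanh_eq_sinh_div_cosh]
    exact div_pos (Real.sinh_pos_iff.mpr ht) (Real.cosh_pos t)
  have htanh_lt : Real.tanh t < t := tanh_lt_self ht
  set D := δ*(δ*lam - κ)*α^2 - (κ + δ*μ) with hDdef
  have hN : 0 < Real.sqrt (2*δ) * (δ*lam - κ) * α := by positivity
  have hD : 0 < D := by
    by_contra hD
    push_neg at hD
    rcases lt_or_eq_of_le hD with hD | hD
    · have : Real.sqrt (2*δ) * (δ*lam - κ) * α / D < 0 := div_neg_of_pos_of_neg hN hD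
      rw [← heq] at this; linarith
    · rw [hD, div_zero] at heq
      rw [heq] at htanh_pos; exact lt_irrefl 0 htanh_pos
  -- from tanh t < t : N/D < t, so N < t*D, i.e. (δλ-κ)*t < t*D, so D > δλ-κ
  have hND : Real.sqrt (2*δ) * (δ*lam - κ) * α < t * D := by
    rw [heq, div_lt_iff₀ hD] at htanh_lt; linarith [htanh_lt]
  have hDgt : δ*lam - κ < D := by
    have hNt : Real.sqrt (2*δ) * (δ*lam - κ) * α = (δ*lam - κ) * t := by ring
    rw [hNt] at hND
    exact lt_of_mul_lt_mul_left (by linarith [hND]) ht.le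
  have hkey : lam + μ < (δ*lam - κ) * α^2 := by
    rw [hDdef] at hDgt
    nlinarith
  have h1 : Real.sqrt ((lam + μ)/(δ*lam - κ)) < α := by
    rw [show α = Real.sqrt (α^2) by rw [Real.sqrt_sq hα.le]]
    apply Real.sqrt_lt_sqrt (by positivity)
    rw [div_lt_iff₀ h]
    linarith [hkey]
  refine ⟨h1, fun x hx => ?_⟩
  have : (δ*lam - κ) * α^2 ≤ (δ*lam - κ) * x^2 := by
    apply mul_le_mul_of_nonneg_left _ h.le
    exact pow_le_pow_left₀ hα.le hx 2
  linarith
end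

section
/- Let δ, κ, λ > 0 and μ ≥ 0 with δλ − κ > 0, suppose δ/(2κ) < √((κ + δμ)/(δ(δλ − κ))), let α be the unique solution in (0, ∞) of tanh(√(2δ)·α) = δ(δ − 2κα) / (√(2δ)(δ(δλ − κ)α² − (κ + δμ))), set A = (δ(δλ − κ)α² − (κ + δμ))/(δ² cosh(√(2δ)α)) (which is negative in this case), and define u(x) = A cosh(√(2δ)x) + (κ/δ)x² + (κ + δμ)/δ² for x ∈ [0, α]. Then the following three conditions are equivalent: (i) |u'(x)| ≤ 1 for all x ∈ [0, α]; (ii) α ≥ √(μ/(δλ − κ)); (iii) tanh(√(2δμ/(δλ − κ))) ≥ √(2δμ/(δλ − κ)) − δ²/(κ√(2δ)). -/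
/-!
With `s = √(2δ)` and `D = δ(δλ − κ)α² − (κ + δμ)`, the derivative `u' = A s sinh(s x) + (2κ/δ) x`
vanishes at `0`, equals `1` at `α` by the free-boundary equation, and is concave on `[0, ∞)` because
`A < 0`. So `|u'| ≤ 1` on `[0, α]` exactly when `u''(α) = 2(κ + D)/δ ≥ 0`, which is (ii).
The free-boundary equation also turns `κ + D ≥ 0` into `sα − tanh(sα) ≤ δ²/(κs)`; as
`x ↦ x − tanh x` is monotone, this threshold for `sα` is equivalent to the same inequality at
`s√(μ/(δλ − κ))`, which is (iii).
-/

open Real Set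

theorem Real.hasDerivAt_tanh_s13 (x : ℝ) : HasDerivAt tanh (1 / cosh x ^ 2) x := by
  have h := (hasDerivAt_sinh x).div (hasDerivAt_cosh x) (cosh_pos x).ne'
  rw [← sq, ← sq, cosh_sq_sub_sinh_sq] at h
  rwa [show tanh = fun y => sinh y / cosh y from funext tanh_eq_sinh_div_cosh]

theorem Real.monotone_id_sub_tanh : Monotone fun x => x - tanh x := by
  have hderiv (x : ℝ) : HasDerivAt (fun x => x - tanh x) (1 - 1 / cosh x ^ 2) x :=
    (hasDerivAt_id x).sub (hasDerivAt_tanh_s13 x)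
  refine monotone_of_deriv_nonneg (fun x => (hderiv x).differentiableAt) fun x => ?_
  rw [(hderiv x).deriv, sub_nonneg, div_le_one (by positivity)]
  exact one_le_pow₀ (one_le_cosh x)

theorem Monotone.le_iff_map_le_of_map_le_iff {α β : Type*} [LinearOrder α] [Preorder β]
    {f : α → β} (hf : Monotone f) {x y : α} {c : β} (h : f y ≤ c ↔ x ≤ y) :
    x ≤ y ↔ f x ≤ c := by
  refine ⟨fun hxy => (hf hxy).trans (h.2 hxy), fun hx => ?_⟩
  by_contra hyx
  exact hyx (h.1 ((hf (not_le.1 hyx).le).trans hx))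

theorem IsMaxOn.nonneg_of_hasDerivWithinAt_right {f : ℝ → ℝ} {f' a b : ℝ} (hab : a < b)
    (hmax : IsMaxOn f (Icc a b) b) (hf : HasDerivWithinAt f f' (Icc a b) b) : 0 ≤ f' := by
  have hcone : a - b ∈ posTangentConeAt (Icc a b) b :=
    sub_mem_posTangentConeAt_of_segment_subset (by rw [segment_symm, segment_eq_Icc hab.le])
  have := hmax.localize.hasFDerivWithinAt_nonpos hf hcone
  rw [ContinuousLinearMap.toSpanSingleton_apply, smul_eq_mul] at this
  nlinarith

theorem monotoneOn_Icc_of_antitoneOn_deriv {f f' : ℝ → ℝ} {a b : ℝ}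
    (hf : ∀ x ∈ Icc a b, HasDerivAt f (f' x) x) (hf' : AntitoneOn f' (Icc a b)) (hb : 0 ≤ f' b) :
    MonotoneOn f (Icc a b) := by
  refine monotoneOn_of_hasDerivWithinAt_nonneg (convex_Icc a b)
    (fun x hx => (hf x hx).continuousAt.continuousWithinAt)
    (fun x hx => (hf x (interior_subset hx)).hasDerivWithinAt) fun x hx => ?_
  rw [interior_Icc] at hx
  exact hb.trans (hf' (Ioo_subset_Icc_self hx) (right_mem_Icc.2 (hx.1.trans hx.2).le) hx.2.le)

theorem forall_abs_le_one_iff_of_antitoneOn_deriv {f f' : ℝ → ℝ} {b : ℝ} (hb : 0 < b)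
    (hf : ∀ x ∈ Icc 0 b, HasDerivAt f (f' x) x) (hf' : AntitoneOn f' (Icc 0 b))
    (h0 : f 0 = 0) (h1 : f b = 1) :
    (∀ x, 0 ≤ x → x ≤ b → |f x| ≤ 1) ↔ 0 ≤ f' b := by
  constructor
  · intro hbound
    have hmax : IsMaxOn f (Icc 0 b) b := fun x hx => h1 ▸ (le_abs_self _).trans (hbound x hx.1 hx.2)
    exact hmax.nonneg_of_hasDerivWithinAt_right hb (hf b (right_mem_Icc.2 hb.le)).hasDerivWithinAt
  · intro hfb x hx0 hxb
    have hmono := monotoneOn_Icc_of_antitoneOn_deriv hf hf' hfb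
    have hlow : f 0 ≤ f x := hmono (left_mem_Icc.2 hb.le) ⟨hx0, hxb⟩ hx0
    have hup : f x ≤ f b := hmono ⟨hx0, hxb⟩ (right_mem_Icc.2 hb.le) hxb
    rw [abs_le]
    constructor <;> linarith

theorem hasDerivAt_cosh_add_quadratic (A s c e x : ℝ) :
    HasDerivAt (fun x => A * cosh (s * x) + c * x ^ 2 + e)
      (A * s * sinh (s * x) + 2 * c * x) x := by
  have hlin : HasDerivAt (fun x => s * x) s x := by simpa using (hasDerivAt_id x).const_mul s
  have hsum := ((hlin.cosh.const_mul A).add ((hasDerivAt_pow 2 x).const_mul c)).add_const e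
  refine hsum.congr_deriv ?_
  norm_num
  ring

theorem hasDerivAt_sinh_add_linear (A s c x : ℝ) :
    HasDerivAt (fun x => A * s * sinh (s * x) + 2 * c * x)
      (A * s ^ 2 * cosh (s * x) + 2 * c) x := by
  have hlin : HasDerivAt (fun x => s * x) s x := by simpa using (hasDerivAt_id x).const_mul s
  refine ((hlin.sinh.const_mul (A * s)).add ((hasDerivAt_id x).const_mul (2 * c))).congr_deriv ?_
  ring

theorem antitoneOn_cosh_add_const {A : ℝ} (s c : ℝ) (hA : A ≤ 0) :
    AntitoneOn (fun x => A * s ^ 2 * cosh (s * x) + 2 * c) (Ici 0) := by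
  intro x hx y _ hxy
  have hcosh : cosh (s * x) ≤ cosh (s * y) := by
    rw [cosh_le_cosh, abs_mul, abs_mul]
    gcongr
  have hAs : A * s ^ 2 ≤ 0 := mul_nonpos_of_nonpos_of_nonneg hA (sq_nonneg s)
  nlinarith

section FreeBoundary

variable {δ κ lam μ α s D : ℝ}

theorem den_neg_of_free_boundary (hδ : 0 < δ) (hκ : 0 < κ) (h : 0 < δ * lam - κ) (hα : 0 < α)
    (hs : 0 < s) (hord : δ / (2 * κ) < √((κ + δ * μ) / (δ * (δ * lam - κ))))
    (heq : tanh (s * α) = δ * (δ - 2 * κ * α) / (s * (δ * (δ * lam - κ) * α ^ 2 - (κ + δ * μ)))) :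
    δ * (δ * lam - κ) * α ^ 2 - (κ + δ * μ) < 0 ∧ δ < 2 * κ * α := by
  set D := δ * (δ * lam - κ) * α ^ 2 - (κ + δ * μ)
  -- `D` and `δ - 2κα` have the same sign, and `D > 0` would give `α < δ/(2κ)`, hence `D < 0`.
  have htanh : 0 < tanh (s * α) :=
    tanh_eq_sinh_div_cosh _ ▸ div_pos (sinh_pos_iff.2 (by positivity)) (cosh_pos _)
  rw [heq, div_pos_iff] at htanh
  rcases htanh with ⟨hnum, hden⟩ | ⟨hnum, hden⟩
  · have hαlt : α < √((κ + δ * μ) / (δ * (δ * lam - κ))) :=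
      lt_of_lt_of_le ((lt_div_iff₀ (by positivity)).2
        (by linarith [pos_of_mul_pos_right hnum hδ.le])) hord.le
    rw [lt_sqrt hα.le, lt_div_iff₀ (by positivity)] at hαlt
    nlinarith [pos_of_mul_pos_right hden hs.le]
  · exact ⟨neg_of_mul_neg_right hden hs.le, by nlinarith⟩

theorem sqrt_div_le_iff_neg_le_den (hδ : 0 < δ) (h : 0 < δ * lam - κ) (hα : 0 < α) :
    √(μ / (δ * lam - κ)) ≤ α ↔ -κ ≤ δ * (δ * lam - κ) * α ^ 2 - (κ + δ * μ) := by
  rw [sqrt_le_left hα.le, div_le_iff₀ h, neg_le_iff_add_nonneg',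
    show κ + (δ * (δ * lam - κ) * α ^ 2 - (κ + δ * μ)) = δ * (α ^ 2 * (δ * lam - κ) - μ) by ring,
    mul_nonneg_iff_of_pos_left hδ, sub_nonneg]

theorem tanh_root_mul_eq (hs : 0 < s) (hD : D < 0)
    (heq : tanh (s * α) = δ * (δ - 2 * κ * α) / (s * D)) :
    tanh (s * α) * (s * D) = δ * (δ - 2 * κ * α) := by
  rw [heq, div_mul_cancel₀ _ (mul_neg_of_pos_of_neg hs hD).ne]

theorem root_mul_sinh_add_eq_one {A : ℝ} (hδ : 0 < δ)
    (hroot : tanh (s * α) * (s * D) = δ * (δ - 2 * κ * α)) (hA : A = D / (δ ^ 2 * cosh (s * α))) :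
    A * s * sinh (s * α) + 2 * (κ / δ) * α = 1 := by
  rw [tanh_eq_sinh_div_cosh] at hroot
  have := cosh_pos (s * α)
  rw [hA]
  field_simp at hroot ⊢
  linear_combination hroot

theorem root_mul_cosh_add_eq {A : ℝ} (hδ : 0 < δ) (hs2 : s ^ 2 = 2 * δ)
    (hA : A = D / (δ ^ 2 * cosh (s * α))) :
    A * s ^ 2 * cosh (s * α) + 2 * (κ / δ) = 2 / δ * (κ + D) := by
  have := cosh_pos (s * α)
  rw [hA, hs2]
  field_simp
  ring

theorem id_sub_tanh_le_iff (hδ : 0 < δ) (hκ : 0 < κ) (hs : 0 < s) (hs2 : s ^ 2 = 2 * δ)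
    (hD : D < 0) (hδα : δ < 2 * κ * α) (hroot : tanh (s * α) * (s * D) = δ * (δ - 2 * κ * α)) :
    s * α - tanh (s * α) ≤ δ ^ 2 / (κ * s) ↔ -κ ≤ D := by
  have hscale : 0 < κ * s * -D := by have := neg_pos.2 hD; positivity
  have hidentity : (δ ^ 2 / (κ * s) - (s * α - tanh (s * α))) * (κ * s * -D)
      = δ * (2 * κ * α - δ) * (κ + D) := by
    field_simp
    linear_combination (-κ) * hroot + κ * α * D * hs2
  rw [← sub_nonneg, ← mul_nonneg_iff_of_pos_right hscale, hidentity,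
    mul_nonneg_iff_of_pos_left (by nlinarith), neg_le_iff_add_nonneg']

end FreeBoundary

theorem statement13_general (δ κ lam μ α A : ℝ) (hδ : 0 < δ) (hκ : 0 < κ)
    (h : 0 < δ*lam - κ)
    (hord : δ/(2*κ) < Real.sqrt ((κ + δ*μ)/(δ*(δ*lam - κ)))) (hα : 0 < α)
    (heq : Real.tanh (Real.sqrt (2*δ) * α) =
      δ*(δ - 2*κ*α) / (Real.sqrt (2*δ) * (δ*(δ*lam - κ)*α^2 - (κ + δ*μ))))
    (hA : A = (δ*(δ*lam - κ)*α^2 - (κ + δ*μ)) / (δ^2 * Real.cosh (Real.sqrt (2*δ) * α)))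
    (u : ℝ → ℝ)
    (hu : ∀ x : ℝ, u x = A * Real.cosh (Real.sqrt (2*δ) * x) + (κ/δ) * x^2 + (κ + δ*μ)/δ^2) :
    A < 0 ∧
    ((∀ x : ℝ, 0 ≤ x → x ≤ α → |deriv u x| ≤ 1) ↔ Real.sqrt (μ/(δ*lam - κ)) ≤ α) ∧
    (Real.sqrt (μ/(δ*lam - κ)) ≤ α ↔
      Real.sqrt (2*δ*μ/(δ*lam - κ)) - δ^2/(κ * Real.sqrt (2*δ)) ≤
        Real.tanh (Real.sqrt (2*δ*μ/(δ*lam - κ)))) := by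
  set s := √(2 * δ)
  set D := δ * (δ * lam - κ) * α ^ 2 - (κ + δ * μ)
  have hs : 0 < s := sqrt_pos.2 (by positivity)
  have hs2 : s ^ 2 = 2 * δ := sq_sqrt (by positivity)
  obtain ⟨hD, hδα⟩ := den_neg_of_free_boundary hδ hκ h hα hs hord heq
  have hroot := tanh_root_mul_eq hs hD heq
  have hA_neg : A < 0 := hA ▸ div_neg_of_neg_of_pos hD (by positivity)
  have hu' : deriv u = fun x => A * s * sinh (s * x) + 2 * (κ / δ) * x := by
    rw [show u = _ from funext hu]
    exact funext fun x => (hasDerivAt_cosh_add_quadratic A s (κ / δ) _ x).deriv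
  have hii := sqrt_div_le_iff_neg_le_den (μ := μ) hδ h hα
  refine ⟨hA_neg, ?_, ?_⟩
  · rw [hu', forall_abs_le_one_iff_of_antitoneOn_deriv hα
      (fun x _ => hasDerivAt_sinh_add_linear A s (κ / δ) x)
      ((antitoneOn_cosh_add_const s (κ / δ) hA_neg.le).mono Icc_subset_Ici_self) (by simp)
      (root_mul_sinh_add_eq_one hδ hroot hA), root_mul_cosh_add_eq hδ hs2 hA, hii,
      mul_nonneg_iff_of_pos_left (by positivity), neg_le_iff_add_nonneg']
  · rw [show 2 * δ * μ / (δ * lam - κ) = 2 * δ * (μ / (δ * lam - κ)) by ring,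
      sqrt_mul (by positivity), sub_le_comm, ← mul_le_mul_iff_right₀ hs]
    exact monotone_id_sub_tanh.le_iff_map_le_of_map_le_iff
      ((id_sub_tanh_le_iff hδ hκ hs hs2 hD hδα hroot).trans
        (hii.symm.trans (mul_le_mul_iff_right₀ hs).symm))

/-- In the case `δ/(2κ) < √((κ + δμ)/(δ(δλ − κ)))`, with `α` the unique positive root
of `tanh(√(2δ)·α) = δ(δ − 2κα)/(√(2δ)(δ(δλ − κ)α² − (κ + δμ)))` and
`A = (δ(δλ − κ)α² − (κ + δμ))/(δ² cosh(√(2δ)α))` (which is negative in this case),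
let `u(x) = A cosh(√(2δ)x) + (κ/δ)x² + (κ + δμ)/δ²`. Then the following three
conditions are equivalent: (i) `|u'(x)| ≤ 1` for all `x ∈ [0, α]`;
(ii) `α ≥ √(μ/(δλ − κ))`;
(iii) `tanh(√(2δμ/(δλ − κ))) ≥ √(2δμ/(δλ − κ)) − δ²/(κ√(2δ))`. -/
theorem statement13 (δ κ lam μ α A : ℝ) (hδ : 0 < δ) (hκ : 0 < κ) (hlam : 0 < lam)
    (hμ : 0 ≤ μ) (h : 0 < δ*lam - κ)
    (hord : δ/(2*κ) < Real.sqrt ((κ + δ*μ)/(δ*(δ*lam - κ)))) (hα : 0 < α)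
    (heq : Real.tanh (Real.sqrt (2*δ) * α) =
      δ*(δ - 2*κ*α) / (Real.sqrt (2*δ) * (δ*(δ*lam - κ)*α^2 - (κ + δ*μ))))
    (hA : A = (δ*(δ*lam - κ)*α^2 - (κ + δ*μ)) / (δ^2 * Real.cosh (Real.sqrt (2*δ) * α)))
    (u : ℝ → ℝ)
    (hu : ∀ x : ℝ, u x = A * Real.cosh (Real.sqrt (2*δ) * x) + (κ/δ) * x^2 + (κ + δ*μ)/δ^2) :
    A < 0 ∧
    ((∀ x : ℝ, 0 ≤ x → x ≤ α → |deriv u x| ≤ 1) ↔ Real.sqrt (μ/(δ*lam - κ)) ≤ α) ∧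
    (Real.sqrt (μ/(δ*lam - κ)) ≤ α ↔
      Real.sqrt (2*δ*μ/(δ*lam - κ)) - δ^2/(κ * Real.sqrt (2*δ)) ≤
        Real.tanh (Real.sqrt (2*δ*μ/(δ*lam - κ)))) :=
  statement13_general δ κ lam μ α A hδ hκ h hord hα heq hA u hu
end

section
/- Let δ, κ, λ > 0 and μ ≥ 0 with δλ − κ > 0, and suppose (κ + δμ)/(δ(δλ − κ)) = δ²/(4κ²). Define u : ℝ → ℝ by u(x) = (κ/δ)x² + (κ + δμ)/δ² for |x| ≤ δ/(2κ) and u(x) = |x| − δ/(2κ) + λδ²/(4κ²) for |x| > δ/(2κ). Then u is continuously differentiable on ℝ, |u'(x)| ≤ 1 for all x ∈ ℝ, (1/2)u''(x) − δu(x) + κx² + μ = 0 for all x with |x| < δ/(2κ), u(x) ≥ λx² for all |x| ≤ δ/(2κ), and u(x) ≤ λx² for all |x| ≥ δ/(2κ). -/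
open Topology

/-!
With `b = δ/(2κ)`, `u` is the Huber function of threshold `b` shifted by `(κ + δμ)/δ²`; the
boundary condition says exactly that this shift is `λb² - b/2`, i.e. `u(±b) = λb²`, and
`δλ > κ` says `2bλ > 1`. The Huber function equals `x²/(2b)` minus the squared positive parts
of `x - b` and `-x - b` divided by `2b`, so it is `C¹` with derivative `x/b` clamped to
`[-1, 1]`. The comparisons with `λx²` come from the factorisations `(b² - x²)(2bλ - 1)/(2b)`
inside and `(|x| - b)(λ(|x| + b) - 1)` outside.
-/

lemma hasDerivAt_max_zero_sq (t : ℝ) :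
    HasDerivAt (fun s : ℝ => max s 0 ^ 2) (2 * max t 0) t := by
  rcases lt_trichotomy t 0 with ht | rfl | ht
  · rw [max_eq_right ht.le, mul_zero]
    refine (hasDerivAt_const t (0 : ℝ)).congr_of_eventuallyEq ?_
    filter_upwards [Iio_mem_nhds ht] with s hs
    simp [max_eq_right (Set.mem_Iio.mp hs).le]
  · have hle : ∀ s : ℝ, ‖max s 0 ^ 2‖ ≤ ‖s ^ 2‖ := fun s => by
      rcases le_total s 0 with hs | hs <;> simp [hs, sq_nonneg]
    rw [max_self, mul_zero, hasDerivAt_iff_isLittleO]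
    simpa using (Asymptotics.isBigO_of_le _ hle).trans_isLittleO
      (Asymptotics.isLittleO_pow_id one_lt_two)
  · rw [max_eq_left ht.le]
    refine (hasDerivAt_pow 2 t).congr_of_eventuallyEq ?_ |>.congr_deriv (by ring)
    filter_upwards [Ioi_mem_nhds ht] with s hs
    simp [max_eq_left (Set.mem_Ioi.mp hs).le]

noncomputable def huber (b x : ℝ) : ℝ := if |x| ≤ b then x ^ 2 / (2 * b) else |x| - b / 2

section huber

variable {b : ℝ}

lemma huber_of_abs_le {x : ℝ} (hx : |x| ≤ b) : huber b x = x ^ 2 / (2 * b) := if_pos hx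

lemma huber_of_le_abs (hb : 0 < b) {x : ℝ} (hx : b ≤ |x|) : huber b x = |x| - b / 2 := by
  rcases hx.lt_or_eq with hx | hx
  · exact if_neg hx.not_ge
  · rw [huber_of_abs_le hx.ge, ← sq_abs, ← hx]
    field_simp
    ring

lemma huber_eq_sub_max_zero_sq (hb : 0 < b) (x : ℝ) :
    huber b x = (x ^ 2 - max (x - b) 0 ^ 2 - max (-x - b) 0 ^ 2) / (2 * b) := by
  rcases le_or_gt |x| b with hx | hx
  · obtain ⟨h₁, h₂⟩ := abs_le.mp hx
    rw [huber_of_abs_le hx, max_eq_right (by linarith), max_eq_right (by linarith)]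
    ring
  · rw [huber_of_le_abs hb hx.le]
    rcases le_or_gt 0 x with h₀ | h₀
    · rw [abs_of_nonneg h₀] at hx ⊢
      rw [max_eq_left (by linarith), max_eq_right (by linarith)]
      field_simp
      ring
    · rw [abs_of_neg h₀] at hx ⊢
      rw [max_eq_right (by linarith), max_eq_left (by linarith)]
      field_simp
      ring

lemma hasDerivAt_huber (hb : 0 < b) (x : ℝ) :
    HasDerivAt (huber b) (max (-b) (min b x) / b) x := by
  have hpos := (hasDerivAt_max_zero_sq (x - b)).comp x ((hasDerivAt_id x).sub_const b)
  have hneg := (hasDerivAt_max_zero_sq (-x - b)).comp x ((hasDerivAt_id x).neg.sub_const b)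
  have hclamp : x - max (x - b) 0 + max (-x - b) 0 = max (-b) (min b x) := by
    rcases le_total x b with h₁ | h₁ <;> rcases le_total (-b) x with h₂ | h₂ <;>
      simp only [max_def, min_def] <;> split_ifs <;> linarith
  refine ((((hasDerivAt_pow 2 x).sub hpos).sub hneg).div_const (2 * b)).congr_deriv ?_
    |>.congr_of_eventuallyEq (.of_forall (huber_eq_sub_max_zero_sq hb))
  rw [← hclamp]
  field_simp
  ring

lemma deriv_huber (hb : 0 < b) : deriv (huber b) = fun x => max (-b) (min b x) / b :=
  funext fun x => (hasDerivAt_huber hb x).deriv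

lemma contDiff_huber (hb : 0 < b) : ContDiff ℝ 1 (huber b) := by
  rw [contDiff_one_iff_deriv, deriv_huber hb]
  exact ⟨fun x => (hasDerivAt_huber hb x).differentiableAt, by fun_prop⟩

lemma abs_deriv_huber_le (hb : 0 < b) (x : ℝ) : |deriv (huber b) x| ≤ 1 := by
  rw [deriv_huber hb, abs_div, abs_of_pos hb, div_le_one hb, abs_le]
  exact ⟨le_max_left _ _, max_le (by linarith) (min_le_left _ _)⟩

lemma deriv_deriv_huber (hb : 0 < b) {x : ℝ} (hx : |x| < b) :
    deriv (deriv (huber b)) x = 1 / b := by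
  have hlin : deriv (huber b) =ᶠ[𝓝 x] fun y => y / b := by
    filter_upwards [(isOpen_lt continuous_abs continuous_const).mem_nhds hx] with y hy
    obtain ⟨h₁, h₂⟩ := abs_lt.mp hy
    rw [deriv_huber hb]
    dsimp only
    rw [min_eq_right h₂.le, max_eq_right h₁.le]
  rw [hlin.deriv_eq, deriv_div_const, deriv_id'']

variable {lam : ℝ}

lemma le_huber_add (hb : 0 < b) (hlam : 1 ≤ 2 * b * lam) {x : ℝ} (hx : |x| ≤ b) :
    lam * x ^ 2 ≤ huber b x + (lam * b ^ 2 - b / 2) := by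
  have hx2 : x ^ 2 ≤ b ^ 2 := sq_le_sq' (abs_le.mp hx).1 (abs_le.mp hx).2
  have hgap : x ^ 2 / (2 * b) + (lam * b ^ 2 - b / 2) - lam * x ^ 2 =
      (b ^ 2 - x ^ 2) * (2 * b * lam - 1) / (2 * b) := by
    field_simp
    ring
  rw [huber_of_abs_le hx, ← sub_nonneg, hgap]
  exact div_nonneg (mul_nonneg (by linarith) (by linarith)) (by positivity)

lemma huber_add_le (hb : 0 < b) (hlam : 1 ≤ 2 * b * lam) {x : ℝ} (hx : b ≤ |x|) :
    huber b x + (lam * b ^ 2 - b / 2) ≤ lam * x ^ 2 := by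
  rw [huber_of_le_abs hb hx, ← sq_abs x]
  have hlam₀ : 0 ≤ lam := by nlinarith
  nlinarith [mul_nonneg (sub_nonneg.mpr hx) (by nlinarith : 0 ≤ lam * (|x| + b) - 1)]

end huber

theorem statement14_general (δ κ lam μ : ℝ) (hδ : 0 < δ) (hκ : 0 < κ)
    (h : 0 < δ*lam - κ)
    (hbd : (κ + δ*μ)/(δ*(δ*lam - κ)) = δ^2/(4*κ^2))
    (u : ℝ → ℝ)
    (hu : ∀ x : ℝ, u x =
      if |x| ≤ δ/(2*κ) then (κ/δ) * x^2 + (κ + δ*μ)/δ^2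
      else |x| - δ/(2*κ) + lam*δ^2/(4*κ^2)) :
    ContDiff ℝ 1 u ∧
    (∀ x : ℝ, |deriv u x| ≤ 1) ∧
    (∀ x : ℝ, |x| < δ/(2*κ) → (1/2) * deriv (deriv u) x - δ * u x + κ * x^2 + μ = 0) ∧
    (∀ x : ℝ, |x| ≤ δ/(2*κ) → lam * x^2 ≤ u x) ∧
    (∀ x : ℝ, δ/(2*κ) ≤ |x| → u x ≤ lam * x^2) := by
  set b := δ / (2 * κ) with hb_def
  have hb : 0 < b := by positivity
  have hc : (κ + δ * μ) / δ ^ 2 = lam * b ^ 2 - b / 2 := by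
    rw [div_eq_div_iff (by positivity) (by positivity)] at hbd
    rw [hb_def]
    field_simp
    linear_combination hbd
  have hlam : 1 ≤ 2 * b * lam := by
    rw [hb_def, show 2 * (δ / (2 * κ)) * lam = δ * lam / κ by field_simp, le_div_iff₀ hκ]
    linarith
  have hu' : u = fun x => huber b x + (κ + δ * μ) / δ ^ 2 := by
    funext x
    rw [hu x, hc, huber]
    split_ifs
    · rw [hb_def]
      field_simp
    · rw [hb_def]
      ring
  subst hu'
  refine ⟨(contDiff_huber hb).add contDiff_const, fun x => ?_, fun x hx => ?_,
    fun x hx => hc ▸ le_huber_add hb hlam hx, fun x hx => hc ▸ huber_add_le hb hlam hx⟩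
  · simpa only [deriv_add_const] using abs_deriv_huber_le hb x
  · beta_reduce
    rw [deriv_add_const', deriv_deriv_huber hb hx, huber_of_abs_le hx.le, hb_def]
    field_simp
    ring

/-- The boundary case: if `(κ + δμ)/(δ(δλ − κ)) = δ²/(4κ²)`, the function `u` defined by
`u(x) = (κ/δ)x² + (κ + δμ)/δ²` for `|x| ≤ δ/(2κ)` and
`u(x) = |x| − δ/(2κ) + λδ²/(4κ²)` for `|x| > δ/(2κ)` is `C¹` on `ℝ`, satisfies
`|u'| ≤ 1` everywhere, solves `(1/2)u'' − δu + κx² + μ = 0` for `|x| < δ/(2κ)`,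
and satisfies `u ≥ λx²` for `|x| ≤ δ/(2κ)` and `u ≤ λx²` for `|x| ≥ δ/(2κ)`. -/
theorem statement14 (δ κ lam μ : ℝ) (hδ : 0 < δ) (hκ : 0 < κ) (hlam : 0 < lam)
    (hμ : 0 ≤ μ) (h : 0 < δ*lam - κ)
    (hbd : (κ + δ*μ)/(δ*(δ*lam - κ)) = δ^2/(4*κ^2))
    (u : ℝ → ℝ)
    (hu : ∀ x : ℝ, u x =
      if |x| ≤ δ/(2*κ) then (κ/δ) * x^2 + (κ + δ*μ)/δ^2
      else |x| - δ/(2*κ) + lam*δ^2/(4*κ^2)) :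
    ContDiff ℝ 1 u ∧
    (∀ x : ℝ, |deriv u x| ≤ 1) ∧
    (∀ x : ℝ, |x| < δ/(2*κ) → (1/2) * deriv (deriv u) x - δ * u x + κ * x^2 + μ = 0) ∧
    (∀ x : ℝ, |x| ≤ δ/(2*κ) → lam * x^2 ≤ u x) ∧
    (∀ x : ℝ, δ/(2*κ) ≤ |x| → u x ≤ lam * x^2) :=
  statement14_general δ κ lam μ hδ hκ h hbd u hu
end

section
/- Let δ > 0 and set α = −1/√(2δ) + √(1/(2δ) + 1). Then (1 − α²)·exp(−√(2δ)(x − α)) ≥ 1 − x² for all x ≥ α. -/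
/-- Let `δ > 0` and `α = −1/√(2δ) + √(1/(2δ) + 1)`. Then
`(1 − α²)e^{−√(2δ)(x − α)} ≥ 1 − x²` for all `x ≥ α`. -/
theorem statement16 (δ α : ℝ) (hδ : 0 < δ)
    (hα : α = -1/Real.sqrt (2*δ) + Real.sqrt (1/(2*δ) + 1)) :
    ∀ x : ℝ, α ≤ x →
      1 - x^2 ≤ (1 - α^2) * Real.exp (-(Real.sqrt (2*δ)) * (x - α)) := by
  intro x hx
  set s := Real.sqrt (2*δ) with hsdef
  have hs : 0 < s := Real.sqrt_pos.mpr (by linarith)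
  have hs2 : s ^ 2 = 2*δ := Real.sq_sqrt (by linarith)
  have hαs : α + 1/s = Real.sqrt (1/s^2 + 1) := by rw [hα, hs2]; ring
  have hsq : (α + 1/s)^2 = 1/s^2 + 1 := by
    rw [hαs]; exact Real.sq_sqrt (by positivity)
  have key : s*(1-α^2) = 2*α := by
    have h := hsq
    field_simp at h
    nlinarith [hs, sq_nonneg s]
  have hα0 : 0 ≤ α := by
    have h2 : 1/s ≤ Real.sqrt (1/s^2 + 1) := by
      rw [Real.le_sqrt (by positivity) (by positivity)]
      rw [div_pow, one_pow]
      linarith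
    linarith [hαs]
  have hα1 : α ≤ 1 := by
    by_contra h
    push_neg at h
    have h2 : (0:ℝ) < α^2 - 1 := by nlinarith
    nlinarith [mul_pos hs h2]
  have hexp : 1 + (-s*(x-α)) ≤ Real.exp (-s*(x-α)) := by
    linarith [Real.add_one_le_exp (-s*(x-α))]
  have h1 : 1 - x^2 ≤ (1 - α^2) * (1 + (-s*(x-α))) := by
    nlinarith [sq_nonneg (x - α)]
  calc 1 - x^2 ≤ (1 - α^2) * (1 + (-s*(x-α))) := h1
    _ ≤ (1 - α^2) * Real.exp (-s*(x-α)) := by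
        apply mul_le_mul_of_nonneg_left hexp; nlinarith
end
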